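/- arXiv:2103.05555 — 2 statements merged into one kernel-verified Lean document; each statement's English description precedes it below -/
import Mathlib

section
/- For every Y > 0, the integral ∫_0^Y e^{2πi x²} dx equals e^{2πi/8}/(2√2) + ν/(2πY) - I₁, where |ν| ≤ 1 and I₁ is the integral of e^{2πi z²} over the circular arc from Y to Y·e^{2πi/8}; moreover |I₁| ≤ 1/(8Y). -/
/-!
Since `z ↦ exp (2πi z²)` is entire it has a primitive, so its integrals along the segment `[0, Y]`,
the arc from `Y` to `Y e^{iπ/4}` and the segment from `0` to `Y e^{iπ/4}` are differences of values
of that primitive. On the last segment the integrand is the Gaussian `e^{-2πt²}` (as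
`(e^{iπ/4})² = i`), whose integral over `[0, Y]` is `1/(2√2)` minus a tail bounded by `1/(2πY)`
through `e^{-2πt²} ≤ e^{-2πYt}` for `t ≥ Y`. On the arc the integrand has modulus
`Y e^{-2πY² sin 2θ} ≤ Y e^{-8Y²θ}` by Jordan's inequality `sin x ≥ 2x/π`, so `|I₁| ≤ 1/(8Y)`.
-/

open Real Complex MeasureTheory Set intervalIntegral
open scoped Interval

theorem integral_comp_mul_deriv_eq_sub_of_hasDerivAt {F f : ℂ → ℂ} {γ γ' : ℝ → ℂ} {a b : ℝ}
    (hF : ∀ t ∈ [[a, b]], HasDerivAt F (f (γ t)) (γ t))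
    (hγ : ∀ t ∈ [[a, b]], HasDerivAt γ (γ' t) t)
    (hint : IntervalIntegrable (fun t => f (γ t) * γ' t) volume a b) :
    ∫ t in a..b, f (γ t) * γ' t = F (γ b) - F (γ a) :=
  integral_eq_sub_of_hasDerivAt (fun t ht => (hF t ht).comp t (hγ t ht)) hint

theorem integral_ofReal_eq_integral_ray_sub_integral_arc {f : ℂ → ℂ} (hf : Differentiable ℂ f)
    (Y α : ℝ) :
    ∫ x in (0:ℝ)..Y, f x =
      (∫ t in (0:ℝ)..Y, f (t * exp (I * α)) * exp (I * α)) -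
        ∫ θ in (0:ℝ)..α, f (Y * exp (I * θ)) * (Y * I * exp (I * θ)) := by
  obtain ⟨F, hF⟩ := hf.isExactOn_univ
  have hF' (z : ℂ) : HasDerivAt F (f z) z := hF z (mem_univ z)
  have hcont := hf.continuous
  have hofReal (t : ℝ) : HasDerivAt (fun t : ℝ => (t : ℂ)) 1 t := (hasDerivAt_id t).ofReal_comp
  have hexp (θ : ℝ) : HasDerivAt (fun θ : ℝ => Y * exp (I * θ)) (Y * I * exp (I * θ)) θ :=
    (((hofReal θ).const_mul I).cexp.const_mul (Y : ℂ)).congr_deriv (by ring)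
  have hsegment := integral_comp_mul_deriv_eq_sub_of_hasDerivAt (a := 0) (b := Y)
    (fun t _ => hF' _) (fun t _ => hofReal t) (by apply Continuous.intervalIntegrable; fun_prop)
  have hray := integral_comp_mul_deriv_eq_sub_of_hasDerivAt (a := 0) (b := Y)
    (fun t _ => hF' _) (fun t _ => (hofReal t).mul_const (exp (I * α)))
    (by apply Continuous.intervalIntegrable; fun_prop)
  have harc := integral_comp_mul_deriv_eq_sub_of_hasDerivAt (a := 0) (b := α)
    (fun t _ => hF' _) (fun t _ => hexp t) (by apply Continuous.intervalIntegrable; fun_prop)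
  simp only [mul_one, one_mul, ofReal_zero, zero_mul, mul_zero, Complex.exp_zero]
    at hsegment hray harc
  rw [hsegment, hray, harc]
  ring

theorem exp_two_pi_I_mul_sq_mul_exp_pi_div_four (t : ℝ) :
    cexp (2 * π * I * (t * cexp (I * ↑(π / 4))) ^ 2) = ↑(Real.exp (-(2 * π) * t ^ 2)) := by
  have hsq : cexp (I * ↑(π / 4)) ^ 2 = I := by
    rw [← Complex.exp_nat_mul,
      show ((2 : ℕ) : ℂ) * (I * ↑(π / 4)) = π / 2 * I by push_cast; ring, exp_pi_div_two_mul_I]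
  rw [mul_pow, hsq, ofReal_exp]
  push_cast
  congr 1
  linear_combination 2 * π * t ^ 2 * I_sq

theorem integral_exp_neg_mul_sq_eq_sub_integral_Ioi {b : ℝ} (hb : 0 < b) (Y : ℝ) :
    ∫ t in (0:ℝ)..Y, Real.exp (-b * t ^ 2) =
      √(π / b) / 2 - ∫ t in Ioi Y, Real.exp (-b * t ^ 2) := by
  rw [← integral_gaussian_Ioi, integral_Ioi_sub_Ioi' (integrable_exp_neg_mul_sq hb).integrableOn
    (integrable_exp_neg_mul_sq hb).integrableOn]

theorem integral_Ioi_exp_neg_mul_sq_le {b Y : ℝ} (hb : 0 < b) (hY : 0 < Y) :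
    ∫ t in Ioi Y, Real.exp (-b * t ^ 2) ≤ 1 / (b * Y) := by
  have hbY : 0 < b * Y := mul_pos hb hY
  calc ∫ t in Ioi Y, Real.exp (-b * t ^ 2)
      ≤ ∫ t in Ioi Y, Real.exp (-(b * Y) * t) := by
        refine setIntegral_mono_on (integrable_exp_neg_mul_sq hb).integrableOn
          (exp_neg_integrableOn_Ioi Y hbY) measurableSet_Ioi fun t (ht : Y < t) => ?_
        have := mul_lt_mul_of_pos_left ht (mul_pos hb (hY.trans ht))
        exact Real.exp_le_exp.2 (by nlinarith)
    _ = Real.exp (-(b * Y) * Y) / (b * Y) := by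
        rw [integral_exp_mul_Ioi (neg_neg_of_pos hbY), neg_div_neg_eq]
    _ ≤ 1 / (b * Y) := by
        gcongr
        exact Real.exp_le_one_iff.2 (by nlinarith)

theorem integral_exp_neg_mul_le {a c : ℝ} (ha : 0 ≤ a) (hc : 0 < c) :
    ∫ θ in (0:ℝ)..a, Real.exp (-c * θ) ≤ 1 / c := by
  calc ∫ θ in (0:ℝ)..a, Real.exp (-c * θ)
      ≤ ∫ θ in Ioi 0, Real.exp (-c * θ) := by
        rw [integral_of_le ha]
        exact setIntegral_mono_set (exp_neg_integrableOn_Ioi 0 hc)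
          (ae_of_all _ fun _ => (Real.exp_pos _).le) Ioc_subset_Ioi_self.eventuallyLE
    _ = 1 / c := by
        rw [integral_exp_mul_Ioi (neg_neg_of_pos hc), mul_zero, Real.exp_zero, neg_div_neg_eq]

theorem norm_exp_two_pi_I_mul_sq_arc (Y θ : ℝ) (hY : 0 ≤ Y) :
    ‖cexp (2 * π * I * (Y * cexp (I * θ)) ^ 2) * (Y * I * cexp (I * θ))‖ =
      Y * Real.exp (-(2 * π * Y ^ 2) * Real.sin (2 * θ)) := by
  have hre : (2 * π * I * (Y * cexp (I * θ)) ^ 2).re = -(2 * π * Y ^ 2) * Real.sin (2 * θ) := by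
    rw [mul_pow, ← Complex.exp_nat_mul,
      show (2 : ℕ) * (I * θ) = ((2 * θ : ℝ) : ℂ) * I by push_cast; ring]
    simp only [mul_re, mul_im, I_re, I_im, ofReal_re, ofReal_im, re_ofNat, im_ofNat,
      exp_ofReal_mul_I_re, exp_ofReal_mul_I_im, ← ofReal_pow]
    ring
  rw [norm_mul, norm_exp, hre, norm_mul, norm_mul, norm_exp_I_mul_ofReal, norm_I, norm_real,
    Real.norm_of_nonneg hY]
  ring

theorem norm_integral_exp_two_pi_I_mul_sq_arc_le {Y : ℝ} (hY : 0 < Y) :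
    ‖∫ θ in (0:ℝ)..(π / 4),
        cexp (2 * π * I * (Y * cexp (I * θ)) ^ 2) * (Y * I * cexp (I * θ))‖ ≤ 1 / (8 * Y) := by
  have hπ4 : 0 ≤ π / 4 := by positivity
  calc _ ≤ ∫ θ in (0:ℝ)..(π / 4), Y * Real.exp (-(8 * Y ^ 2) * θ) := by
        refine intervalIntegral.norm_integral_le_of_norm_le hπ4 (ae_of_all _ fun θ hθ => ?_)
          (by apply Continuous.intervalIntegrable; fun_prop)
        rw [norm_exp_two_pi_I_mul_sq_arc Y θ hY.le]
        obtain ⟨hθ₀, hθ₁⟩ := Ioc_subset_Icc_self hθ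
        have hjordan := Real.mul_le_sin (by linarith : 0 ≤ 2 * θ) (by linarith : 2 * θ ≤ π / 2)
        rw [div_mul_eq_mul_div, div_le_iff₀ pi_pos] at hjordan
        exact mul_le_mul_of_nonneg_left (Real.exp_le_exp.2 (by nlinarith [sq_nonneg Y])) hY.le
    _ = Y * ∫ θ in (0:ℝ)..(π / 4), Real.exp (-(8 * Y ^ 2) * θ) := integral_const_mul _ _
    _ ≤ Y * (1 / (8 * Y ^ 2)) := by gcongr; exact integral_exp_neg_mul_le hπ4 (by positivity)
    _ = 1 / (8 * Y) := by field_simp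

theorem integral_exp_two_pi_I_mul_sq_eq (Y : ℝ) :
    ∫ x in (0:ℝ)..Y, cexp (2 * π * I * (x : ℂ) ^ 2) =
      cexp (2 * π * I / 8) * (1 / (2 * √2) - ↑(∫ t in Ioi Y, Real.exp (-(2 * π) * t ^ 2))) -
        ∫ θ in (0:ℝ)..(π / 4),
          cexp (2 * π * I * (Y * cexp (I * θ)) ^ 2) * (Y * I * cexp (I * θ)) := by
  have hω : cexp (I * ↑(π / 4)) = cexp (2 * π * I / 8) := by congr 1; push_cast; ring
  have hsqrt : √(π / (2 * π)) / 2 = 1 / (2 * √2) := by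
    rw [show π / (2 * π) = 2⁻¹ by field_simp, Real.sqrt_inv]
    ring
  rw [integral_ofReal_eq_integral_ray_sub_integral_arc (f := fun z => cexp (2 * π * I * z ^ 2))
    (by fun_prop) Y (π / 4)]
  simp only [exp_two_pi_I_mul_sq_mul_exp_pi_div_four, intervalIntegral.integral_mul_const,
    intervalIntegral.integral_ofReal, integral_exp_neg_mul_sq_eq_sub_integral_Ioi two_pi_pos]
  rw [hsqrt, hω]
  push_cast
  ring

theorem fresnel_contour (Y : ℝ) (hY : 0 < Y) :
    ∃ ν I₁ : ℂ,
      I₁ = ∫ θ in (0:ℝ)..(Real.pi / 4),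
        Complex.exp (2 * Real.pi * Complex.I * (Y * Complex.exp (Complex.I * θ)) ^ 2) *
          (Y * Complex.I * Complex.exp (Complex.I * θ)) ∧
      ‖ν‖ ≤ 1 ∧
      (∫ x in (0:ℝ)..Y, Complex.exp (2 * Real.pi * Complex.I * (x:ℂ) ^ 2)) =
        Complex.exp (2 * Real.pi * Complex.I / 8) / (2 * Real.sqrt 2)
          + ν / (2 * Real.pi * Y) - I₁ ∧
      ‖I₁‖ ≤ 1 / (8 * Y) := by
  set tail := ∫ t in Ioi Y, Real.exp (-(2 * π) * t ^ 2) with htail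
  have htail_le : tail ≤ 1 / (2 * π * Y) := integral_Ioi_exp_neg_mul_sq_le two_pi_pos hY
  have htail_nonneg : 0 ≤ tail :=
    setIntegral_nonneg measurableSet_Ioi fun _ _ => (Real.exp_pos _).le
  refine ⟨-(2 * π * Y * tail : ℝ) * cexp (2 * π * I / 8), _, rfl, ?_, ?_,
    norm_integral_exp_two_pi_I_mul_sq_arc_le hY⟩
  · rw [norm_mul, norm_neg, show 2 * π * I / 8 = I * ↑(π / 4) by push_cast; ring,
      norm_exp_I_mul_ofReal, mul_one, norm_real, Real.norm_of_nonneg (by positivity)]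
    rwa [le_div_iff₀ (by positivity), mul_comm] at htail_le
  · rw [integral_exp_two_pi_I_mul_sq_eq, ← htail]
    have hY' : (Y : ℂ) ≠ 0 := ofReal_ne_zero.2 hY.ne'
    congr 1
    field_simp
    push_cast
    ring
end

section
/- Let x = a₁/q + β₁ and t = a₂/q + β₂ with q a positive integer and a₁, a₂ integers. Then ∑_{n=1}^N e(nx + n²t) = q^{−1}·(∑_{y=1}^q e((ya₁ + y²a₂)/q))·(∫_0^N e(β₁γ + β₂γ²)dγ) + Δ, where |Δ| ≤ C·q·(1 + |β₁|N + |β₂|N²) for an absolute constant C. -/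
open Real Complex Finset

open MeasureTheory intervalIntegral

/-!
The weight `n ↦ e((a₁ n + a₂ n²) / q)` has period `q`, and `γ ↦ e(β₁ γ + β₂ γ²)` is `L`-Lipschitz
on `[0, N]` with `L = 2π (|β₁| + 2N |β₂|)`. Over a block of `q` consecutive integers the weights run
through a full period, so their sum is the complete sum, and replacing the smooth factor at each
point by its mean over the block costs at most `L q`, i.e. `L q²` per block. At most `N / q` blocks
and one incomplete block (trivially bounded by `2q`) give the error bound `q (2 + L N)`.
-/

theorem Function.Periodic.sum_Ioc_add_eq {M : Type*} [AddCommGroup M] {c : ℕ → M} {q : ℕ}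
    (hc : Function.Periodic c q) (N : ℕ) :
    ∑ n ∈ Ioc N (N + q), c n = ∑ n ∈ Ioc 0 q, c n := by
  induction N with
  | zero => simp
  | succ N ih =>
    have htop := sum_Ioc_succ_top (show N ≤ N + q by omega) c
    have hlow := sum_Ioc_consecutive c (Nat.le_succ N) (show N + 1 ≤ N + q + 1 by omega)
    rw [Nat.Ioc_succ_singleton, sum_singleton, htop, show N + q + 1 = N + 1 + q by omega,
      hc (N + 1), add_comm] at hlow
    rw [← ih, ← add_right_cancel hlow]

theorem norm_sub_inv_smul_integral_le {E : Type*} [NormedAddCommGroup E] [NormedSpace ℝ E]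
    [CompleteSpace E] {f : ℝ → E} {a b K : ℝ} (hab : a < b) (hf : IntervalIntegrable f volume a b)
    (x : E) (hK : ∀ γ ∈ Set.Icc a b, ‖x - f γ‖ ≤ K) :
    ‖x - (b - a)⁻¹ • ∫ γ in a..b, f γ‖ ≤ K := by
  have hba : 0 < b - a := sub_pos.2 hab
  have hx : x - (b - a)⁻¹ • ∫ γ in a..b, f γ = (b - a)⁻¹ • ∫ γ in a..b, (x - f γ) := by
    rw [integral_sub intervalIntegrable_const hf, intervalIntegral.integral_const, smul_sub,
      inv_smul_smul₀ hba.ne']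
  have hint : ‖∫ γ in a..b, (x - f γ)‖ ≤ K * |b - a| :=
    norm_integral_le_of_norm_le_const fun γ hγ ↦
      hK γ (Set.Ioc_subset_Icc_self (by rwa [Set.uIoc_of_le hab.le] at hγ))
  rw [hx, norm_smul, Real.norm_of_nonneg (inv_nonneg.2 hba.le)]
  rw [abs_of_pos hba] at hint
  calc (b - a)⁻¹ * ‖∫ γ in a..b, (x - f γ)‖ ≤ (b - a)⁻¹ * (K * (b - a)) := by gcongr
    _ = K := by field_simp

noncomputable def discrepancy (c : ℕ → ℂ) (G : ℝ → ℂ) (q a b : ℕ) : ℂ :=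
  ∑ n ∈ Ioc a b, c n * G n - (q : ℂ)⁻¹ * (∑ y ∈ Ioc 0 q, c y) * ∫ γ in (a : ℝ)..b, G γ

section Discrepancy

variable {c : ℕ → ℂ} {G : ℝ → ℂ} {q : ℕ} {L X : ℝ}

theorem discrepancy_add (hG : Continuous G) {a b d : ℕ} (hab : a ≤ b) (hbd : b ≤ d) :
    discrepancy c G q a b + discrepancy c G q b d = discrepancy c G q a d := by
  simp only [discrepancy]
  rw [← sum_Ioc_consecutive _ hab hbd,
    ← integral_add_adjacent_intervals (hG.intervalIntegrable (a : ℝ) b)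
      (hG.intervalIntegrable (b : ℝ) d)]
  ring

theorem norm_discrepancy_zero_le (hc1 : ∀ n, ‖c n‖ ≤ 1) (hG1 : ∀ x, ‖G x‖ ≤ 1) (N : ℕ) :
    ‖discrepancy c G q 0 N‖ ≤ 2 * N := by
  have hsum : ‖∑ n ∈ Ioc 0 N, c n * G n‖ ≤ N := by
    simpa using norm_sum_le_of_le (Ioc 0 N) fun n _ ↦
      (norm_mul_le _ _).trans (mul_le_one₀ (hc1 n) (norm_nonneg _) (hG1 n))
  have hmean : ‖(q : ℂ)⁻¹ * ∑ y ∈ Ioc 0 q, c y‖ ≤ 1 := by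
    rcases Nat.eq_zero_or_pos q with rfl | hq
    · simp
    rw [norm_mul, norm_inv, Complex.norm_natCast]
    calc (q : ℝ)⁻¹ * ‖∑ y ∈ Ioc 0 q, c y‖ ≤ (q : ℝ)⁻¹ * q := by
          gcongr; simpa using norm_sum_le_of_le (Ioc 0 q) fun n _ ↦ hc1 n
      _ = 1 := inv_mul_cancel₀ (by positivity)
  have hint : ‖∫ γ in (0 : ℝ)..N, G γ‖ ≤ N := by
    simpa using norm_integral_le_of_norm_le_const (a := 0) (b := N) fun x _ ↦ hG1 x
  calc ‖discrepancy c G q 0 N‖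
      ≤ ‖∑ n ∈ Ioc 0 N, c n * G n‖ + ‖(q : ℂ)⁻¹ * ∑ y ∈ Ioc 0 q, c y‖ * ‖∫ γ in (0 : ℝ)..N, G γ‖ :=
        (norm_sub_le _ _).trans_eq (by rw [norm_mul, Nat.cast_zero])
    _ ≤ N + 1 * N := by gcongr
    _ = 2 * N := by ring

theorem norm_discrepancy_add_period_le (hq : 0 < q) (hc : Function.Periodic c q)
    (hc1 : ∀ n, ‖c n‖ ≤ 1) (hG : Continuous G) (hL : 0 ≤ L)
    (hGL : ∀ u ∈ Set.Icc 0 X, ∀ v ∈ Set.Icc 0 X, ‖G u - G v‖ ≤ L * |u - v|)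
    {M : ℕ} (hM : (M : ℝ) + q ≤ X) :
    ‖discrepancy c G q M (M + q)‖ ≤ L * q ^ 2 := by
  set avg : ℂ := (q : ℂ)⁻¹ * ∫ γ in (M : ℝ)..((M + q : ℕ) : ℝ), G γ
  have hdev : ∀ n ∈ Ioc M (M + q), ‖G n - avg‖ ≤ L * q := by
    intro n hn
    obtain ⟨hMn, hnq⟩ : (M : ℝ) < n ∧ (n : ℝ) ≤ M + q := by
      rw [mem_Ioc] at hn; exact_mod_cast hn
    have hclose : ∀ γ ∈ Set.Icc (M : ℝ) (M + q), ‖G n - G γ‖ ≤ L * q := fun γ ⟨hγ₁, hγ₂⟩ ↦ by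
      have hM₀ : (0 : ℝ) ≤ M := M.cast_nonneg
      refine (hGL n ⟨by linarith, by linarith⟩ γ ⟨by linarith, by linarith⟩).trans ?_
      gcongr
      exact abs_sub_le_iff.2 ⟨by linarith, by linarith⟩
    simpa [avg, Complex.real_smul] using
      norm_sub_inv_smul_integral_le (by simpa using hq) (hG.intervalIntegrable _ _) (G n) hclose
  have hmain : (q : ℂ)⁻¹ * (∑ y ∈ Ioc 0 q, c y) * ∫ γ in (M : ℝ)..((M + q : ℕ) : ℝ), G γ =
      ∑ n ∈ Ioc M (M + q), c n * avg := by
    rw [← sum_mul, hc.sum_Ioc_add_eq]; ring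
  calc ‖discrepancy c G q M (M + q)‖ = ‖∑ n ∈ Ioc M (M + q), c n * (G n - avg)‖ := by
        rw [discrepancy, hmain, ← sum_sub_distrib]; simp only [mul_sub]
    _ ≤ ∑ n ∈ Ioc M (M + q), 1 * (L * q) := norm_sum_le_of_le _ fun n hn ↦
        (norm_mul_le _ _).trans (mul_le_mul (hc1 n) (hdev n hn) (norm_nonneg _) zero_le_one)
    _ = L * q ^ 2 := by
        simp only [one_mul, sum_const, Nat.card_Ioc, add_tsub_cancel_left, nsmul_eq_mul]; ring

theorem norm_discrepancy_le (hq : 0 < q) (hc : Function.Periodic c q)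
    (hc1 : ∀ n, ‖c n‖ ≤ 1) (hG : Continuous G) (hG1 : ∀ x, ‖G x‖ ≤ 1) (hL : 0 ≤ L)
    (hGL : ∀ u ∈ Set.Icc 0 X, ∀ v ∈ Set.Icc 0 X, ‖G u - G v‖ ≤ L * |u - v|)
    {N : ℕ} (hN : (N : ℝ) ≤ X) :
    ‖discrepancy c G q 0 N‖ ≤ q * (2 + L * N) := by
  induction N using Nat.strong_induction_on with
  | _ N ih =>
  rcases lt_or_ge N q with hNq | hqN
  · have hNq' : (N : ℝ) ≤ q := by exact_mod_cast hNq.le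
    nlinarith [norm_discrepancy_zero_le (q := q) hc1 hG1 N,
      mul_nonneg hL (N.cast_nonneg : (0 : ℝ) ≤ N)]
  obtain ⟨M, rfl⟩ : ∃ M, N = M + q := ⟨N - q, by omega⟩
  push_cast at hN
  have hMX : (M : ℝ) ≤ X := by linarith [(q.cast_nonneg : (0 : ℝ) ≤ q)]
  calc ‖discrepancy c G q 0 (M + q)‖
      = ‖discrepancy c G q 0 M + discrepancy c G q M (M + q)‖ := by
        rw [discrepancy_add hG (Nat.zero_le M) (by omega)]
    _ ≤ q * (2 + L * M) + L * q ^ 2 :=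
        norm_add_le_of_le (ih M (by omega) hMX)
          (norm_discrepancy_add_period_le hq hc hc1 hG hL hGL hN)
    _ = q * (2 + L * (M + q : ℕ)) := by push_cast; ring

end Discrepancy

noncomputable def e (r : ℝ) : ℂ := Complex.exp (2 * π * I * r)

theorem norm_e (r : ℝ) : ‖e r‖ = 1 := by
  rw [e, show 2 * π * I * r = ((2 * π * r : ℝ) : ℂ) * I by push_cast; ring, norm_exp_ofReal_mul_I]

theorem continuous_e : Continuous e := by
  unfold e; fun_prop

theorem e_add (r s : ℝ) : e (r + s) = e r * e s := by
  rw [e, e, e, ← Complex.exp_add]; congr 1; push_cast; ring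

theorem e_intCast (k : ℤ) : e k = 1 := by
  rw [e, show 2 * π * I * ((k : ℝ) : ℂ) = k * (2 * π * I) by push_cast; ring]
  exact exp_int_mul_two_pi_mul_I k

theorem norm_e_sub_e_le (r s : ℝ) : ‖e r - e s‖ ≤ 2 * π * |r - s| := by
  have hfactor : e r - e s = e s * (Complex.exp (I * ↑(2 * π * (r - s))) - 1) := by
    rw [show I * ↑(2 * π * (r - s)) = 2 * π * I * ↑(r - s) by push_cast; ring, ← e, mul_sub,
      ← e_add, add_sub_cancel, mul_one]
  rw [hfactor, norm_mul, norm_e, one_mul]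
  refine norm_exp_I_mul_ofReal_sub_one_le.trans_eq ?_
  rw [Real.norm_eq_abs, abs_mul, abs_of_pos two_pi_pos]

theorem norm_e_quadratic_sub_le (β₁ β₂ : ℝ) {X u v : ℝ} (hu : u ∈ Set.Icc 0 X)
    (hv : v ∈ Set.Icc 0 X) :
    ‖e (β₁ * u + β₂ * u ^ 2) - e (β₁ * v + β₂ * v ^ 2)‖ ≤
      2 * π * (|β₁| + 2 * X * |β₂|) * |u - v| := by
  refine (norm_e_sub_e_le _ _).trans ?_
  rw [mul_assoc (2 * π)]
  refine mul_le_mul_of_nonneg_left ?_ two_pi_pos.le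
  have huv : |u + v| ≤ 2 * X := by
    rw [abs_le]; constructor <;> linarith [hu.1, hu.2, hv.1, hv.2]
  calc |β₁ * u + β₂ * u ^ 2 - (β₁ * v + β₂ * v ^ 2)| = |β₁ + β₂ * (u + v)| * |u - v| := by
        rw [← abs_mul]; ring_nf
    _ ≤ (|β₁| + |β₂| * (2 * X)) * |u - v| := by
        gcongr
        exact (abs_add_le _ _).trans (by rw [abs_mul]; gcongr)
    _ = (|β₁| + 2 * X * |β₂|) * |u - v| := by ring

theorem periodic_e_quadratic_div (a₁ a₂ : ℤ) (q : ℕ) :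
    Function.Periodic (fun n : ℕ ↦ e ((((n : ℤ) * a₁ + (n : ℤ) ^ 2 * a₂ : ℤ) : ℝ) / q)) q := by
  intro n
  rcases Nat.eq_zero_or_pos q with rfl | hq
  · simp
  have hq' : (q : ℝ) ≠ 0 := by positivity
  have hshift : ((((n + q : ℕ) : ℤ) * a₁ + ((n + q : ℕ) : ℤ) ^ 2 * a₂ : ℤ) : ℝ) / q =
      (((n : ℤ) * a₁ + (n : ℤ) ^ 2 * a₂ : ℤ) : ℝ) / q + ((a₁ + (2 * n + q) * a₂ : ℤ) : ℝ) := by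
    field_simp; push_cast; ring
  dsimp only
  rw [hshift, e_add, e_intCast, mul_one]

theorem exp_quadratic_phase_eq_mul {q : ℕ} {a₁ a₂ : ℤ} {β₁ β₂ x t : ℝ}
    (hx : x = (a₁ : ℝ) / q + β₁) (ht : t = (a₂ : ℝ) / q + β₂) (n : ℕ) :
    Complex.exp (2 * π * I * ((n : ℝ) * x + (n : ℝ) ^ 2 * t)) =
      e ((((n : ℤ) * a₁ + (n : ℤ) ^ 2 * a₂ : ℤ) : ℝ) / q) * e (β₁ * n + β₂ * n ^ 2) := by
  rw [← e_add, e, hx, ht]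
  congr 1; push_cast; ring

theorem weyl_sum_major_arc_approx :
    ∃ C : ℝ, 0 < C ∧ ∀ N q : ℕ, 0 < q → ∀ a₁ a₂ : ℤ, ∀ β₁ β₂ x t : ℝ,
      x = (a₁ : ℝ) / q + β₁ → t = (a₂ : ℝ) / q + β₂ →
      ‖((∑ n ∈ Finset.Icc 1 N,
            Complex.exp (2 * Real.pi * Complex.I * ((n : ℝ) * x + (n : ℝ) ^ 2 * t))) -
          (q : ℂ)⁻¹ *
            (∑ y ∈ Finset.Icc 1 q,
              Complex.exp (2 * Real.pi * Complex.I *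
                ((((y : ℤ) * a₁ + (y : ℤ) ^ 2 * a₂ : ℤ) : ℂ) / (q : ℂ)))) *
            (∫ γ in (0:ℝ)..(N : ℝ),
              Complex.exp (2 * Real.pi * Complex.I * (β₁ * γ + β₂ * γ ^ 2))))‖ ≤
        C * q * (1 + |β₁| * N + |β₂| * (N : ℝ) ^ 2) := by
  refine ⟨13, by norm_num, ?_⟩
  intro N q hq a₁ a₂ β₁ β₂ x t hx ht
  set c : ℕ → ℂ := fun n ↦ e ((((n : ℤ) * a₁ + (n : ℤ) ^ 2 * a₂ : ℤ) : ℝ) / q)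
  set G : ℝ → ℂ := fun γ ↦ e (β₁ * γ + β₂ * γ ^ 2)
  have hdisc := norm_discrepancy_le (c := c) (G := G) (X := N) hq
    (periodic_e_quadratic_div a₁ a₂ q) (fun n ↦ (norm_e _).le) (continuous_e.comp (by fun_prop))
    (fun γ ↦ (norm_e _).le) (by positivity) (fun u hu v hv ↦ norm_e_quadratic_sub_le β₁ β₂ hu hv) le_rfl
  have hsum : ∑ n ∈ Icc 1 N, Complex.exp (2 * π * I * ((n : ℝ) * x + (n : ℝ) ^ 2 * t)) =
      ∑ n ∈ Ioc 0 N, c n * G n := by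
    rw [← Finset.Icc_add_one_left_eq_Ioc, zero_add]
    exact sum_congr rfl fun n _ ↦ exp_quadratic_phase_eq_mul hx ht n
  have hmean : ∑ y ∈ Icc 1 q, Complex.exp (2 * π * I *
      ((((y : ℤ) * a₁ + (y : ℤ) ^ 2 * a₂ : ℤ) : ℂ) / (q : ℂ))) = ∑ y ∈ Ioc 0 q, c y := by
    rw [← Finset.Icc_add_one_left_eq_Ioc, zero_add]
    refine sum_congr rfl fun y _ ↦ ?_
    simp only [c, e]; push_cast; ring
  have hint : ∫ γ in (0 : ℝ)..N, Complex.exp (2 * π * I * (β₁ * γ + β₂ * γ ^ 2)) =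
      ∫ γ in (0 : ℝ)..N, G γ :=
    integral_congr fun γ _ ↦ by simp only [G, e]; push_cast; ring
  rw [discrepancy, Nat.cast_zero] at hdisc
  rw [hsum, hmean, hint]
  refine hdisc.trans ?_
  have h₁ : 0 ≤ |β₁| * N := by positivity
  have h₂ : 0 ≤ |β₂| * (N : ℝ) ^ 2 := by positivity
  have hπ : π < 3.15 := pi_lt_d2
  nlinarith [mul_le_mul_of_nonneg_right hπ.le h₁, mul_le_mul_of_nonneg_right hπ.le h₂]
end
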